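/- There exist a homeomorphism f : ℝ² → ℝ² and a set S ⊆ ℝ² such that, for the quasi-arithmetic mean operator with m = 2 and weights α₁ = α₂ = 1/2, the set 𝓜^ω(S) is relatively dense in conv(S), yet f[conv(S)] is not contained in conv(f[S]). Concretely, one may take f with f[[−1,1]²] equal to the closed unit disc B, f(1,0) = (1,0), and S := [−1,1]² \ {(1,0)}; then 𝓜^ω(S) is relatively dense in conv(S) = [−1,1]², while f[conv(S)] = B ⊄ conv(f[S]) = B \ {(1,0)}. Hence the equivalence of conditions (i) and (iii) of the main theorem fails without compactness of S. -/

import Mathlib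

open Set

/-- The mean set for `m = 2`, weights `1/2, 1/2`, with respect to a self-homeomorphism
`f` of the Euclidean plane: `𝓜(S) = { f⁻¹((f x + f y)/2) : x, y ∈ S }`. -/
def meanSet2 (f : EuclideanSpace ℝ (Fin 2) ≃ₜ EuclideanSpace ℝ (Fin 2))
    (S : Set (EuclideanSpace ℝ (Fin 2))) : Set (EuclideanSpace ℝ (Fin 2)) :=
  {z | ∃ x ∈ S, ∃ y ∈ S, z = f.symm ((1 / 2 : ℝ) • f x + (1 / 2 : ℝ) • f y)}

/-- Iterates `𝓜ⁿ`. -/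
def meanIter2 (f : EuclideanSpace ℝ (Fin 2) ≃ₜ EuclideanSpace ℝ (Fin 2))
    (S : Set (EuclideanSpace ℝ (Fin 2))) : ℕ → Set (EuclideanSpace ℝ (Fin 2))
  | 0 => S
  | n + 1 => meanSet2 f (meanIter2 f S n)

/-- `𝓜^ω(S) = ⋃ₙ 𝓜ⁿ(S)`. -/
def meanOmega2 (f : EuclideanSpace ℝ (Fin 2) ≃ₜ EuclideanSpace ℝ (Fin 2))
    (S : Set (EuclideanSpace ℝ (Fin 2))) : Set (EuclideanSpace ℝ (Fin 2)) :=
  ⋃ n, meanIter2 f S n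

section Helpers

open Metric Filter
open scoped Classical

noncomputable section

abbrev E2 := EuclideanSpace ℝ (Fin 2)

/-- sup norm on the plane -/
def Nsup (x : E2) : ℝ := ‖WithLp.equiv 2 (Fin 2 → ℝ) x‖

lemma Nsup_nonneg (x : E2) : 0 ≤ Nsup x := norm_nonneg _

lemma Nsup_eq_zero_iff {x : E2} : Nsup x = 0 ↔ x = 0 := by
  rw [Nsup, norm_eq_zero]
  exact WithLp.ofLp_eq_zero 2

lemma Nsup_smul (c : ℝ) (x : E2) : Nsup (c • x) = |c| * Nsup x := by
  rw [Nsup, show WithLp.equiv 2 (Fin 2 → ℝ) (c • x) = c • WithLp.equiv 2 (Fin 2 → ℝ) x from rfl, norm_smul, Real.norm_eq_abs, Nsup]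

lemma continuous_Nsup : Continuous Nsup :=
  continuous_norm.comp (PiLp.continuous_ofLp (p := 2) (β := fun _ : Fin 2 => ℝ))

lemma abs_le_Nsup (x : E2) (i : Fin 2) : |x i| ≤ Nsup x := by
  have := norm_le_pi_norm (WithLp.equiv 2 (Fin 2 → ℝ) x) i
  simpa [Real.norm_eq_abs, Nsup] using this

lemma Nsup_le_iff {x : E2} {r : ℝ} (hr : 0 ≤ r) : Nsup x ≤ r ↔ ∀ i, |x i| ≤ r := by
  rw [Nsup, pi_norm_le_iff_of_nonneg hr]
  simp [Real.norm_eq_abs]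

lemma abs_le_norm (x : E2) (i : Fin 2) : |x i| ≤ ‖x‖ := by
  rw [EuclideanSpace.norm_eq]
  calc |x i| = Real.sqrt (‖x i‖ ^ 2) := by
        rw [Real.sqrt_sq_eq_abs, abs_norm, Real.norm_eq_abs]
    _ ≤ _ := by
        apply Real.sqrt_le_sqrt
        exact Finset.single_le_sum (fun j _ => sq_nonneg ‖x j‖) (Finset.mem_univ i)

lemma Nsup_le_norm (x : E2) : Nsup x ≤ ‖x‖ :=
  (Nsup_le_iff (norm_nonneg x)).2 (abs_le_norm x)

lemma norm_le_two_Nsup (x : E2) : ‖x‖ ≤ 2 * Nsup x := by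
  have h0 := abs_le_Nsup x 0
  have h1 := abs_le_Nsup x 1
  have hn : 0 ≤ Nsup x := Nsup_nonneg x
  rw [EuclideanSpace.norm_eq, Fin.sum_univ_two]
  rw [show (2 : ℝ) * Nsup x = Real.sqrt ((2 * Nsup x) ^ 2) by
    rw [Real.sqrt_sq (by linarith)]]
  apply Real.sqrt_le_sqrt
  simp only [Real.norm_eq_abs]
  nlinarith [abs_nonneg (x 0), abs_nonneg (x 1)]

def fmap (x : E2) : E2 := if x = 0 then 0 else (Nsup x / ‖x‖) • x

def gmap (y : E2) : E2 := if y = 0 then 0 else (‖y‖ / Nsup y) • y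

lemma norm_fmap (x : E2) : ‖fmap x‖ = Nsup x := by
  unfold fmap
  split_ifs with h
  · simp [h, Nsup_eq_zero_iff.2 rfl]
  · have hx : (0:ℝ) < ‖x‖ := norm_pos_iff.2 h
    rw [norm_smul, Real.norm_eq_abs, abs_div, abs_of_nonneg (Nsup_nonneg x),
      abs_of_pos hx, div_mul_cancel₀ _ hx.ne']

lemma Nsup_gmap (y : E2) : Nsup (gmap y) = ‖y‖ := by
  unfold gmap
  split_ifs with h
  · simp [h, Nsup_eq_zero_iff.2 rfl]
  · have hy : (0:ℝ) < Nsup y := by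
      rcases (Nsup_nonneg y).lt_or_eq with h' | h'
      · exact h'
      · exact absurd (Nsup_eq_zero_iff.1 h'.symm) h
    rw [Nsup_smul, abs_div, abs_of_nonneg (norm_nonneg y), abs_of_pos hy,
      div_mul_cancel₀ _ hy.ne']

lemma gmap_fmap (x : E2) : gmap (fmap x) = x := by
  by_cases h : x = 0
  · simp [h, fmap, gmap]
  · have hx : (0:ℝ) < ‖x‖ := norm_pos_iff.2 h
    have hN : (0:ℝ) < Nsup x := by
      rcases (Nsup_nonneg x).lt_or_eq with h' | h'
      · exact h'
      · exact absurd (Nsup_eq_zero_iff.1 h'.symm) h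
    have hf : fmap x ≠ 0 := by
      intro h0
      have := norm_fmap x
      rw [h0, norm_zero] at this
      exact hN.ne this
    rw [gmap, if_neg hf, norm_fmap, fmap, if_neg h, Nsup_smul, smul_smul]
    have hc : Nsup x / (|Nsup x / ‖x‖| * Nsup x) * (Nsup x / ‖x‖) = 1 := by
      rw [abs_div, abs_of_nonneg (Nsup_nonneg x), abs_of_pos hx]
      field_simp
    rw [hc, one_smul]

lemma fmap_gmap (y : E2) : fmap (gmap y) = y := by
  by_cases h : y = 0
  · simp [h, fmap, gmap]
  · have hy : (0:ℝ) < ‖y‖ := norm_pos_iff.2 h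
    have hN : (0:ℝ) < Nsup y := by
      rcases (Nsup_nonneg y).lt_or_eq with h' | h'
      · exact h'
      · exact absurd (Nsup_eq_zero_iff.1 h'.symm) h
    have hg : gmap y ≠ 0 := by
      intro h0
      have := Nsup_gmap y
      rw [h0, Nsup_eq_zero_iff.2 rfl] at this
      exact hy.ne this
    rw [fmap, if_neg hg, Nsup_gmap, gmap, if_neg h, norm_smul, smul_smul]
    have hc : ‖y‖ / (‖‖y‖ / Nsup y‖ * ‖y‖) * (‖y‖ / Nsup y) = 1 := by
      rw [Real.norm_eq_abs, abs_div, abs_of_nonneg (norm_nonneg y), abs_of_pos hN]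
      field_simp
    rw [hc, one_smul]

lemma continuous_fmap : Continuous fmap := by
  rw [continuous_iff_continuousAt]
  intro x
  by_cases h : x = 0
  · subst h
    have h0 : fmap 0 = 0 := by simp [fmap]
    show Tendsto fmap (nhds 0) (nhds (fmap 0))
    rw [h0]
    refine squeeze_zero_norm (fun z => ?_) (a := fun x : E2 => ‖x‖) ?_
    · rw [norm_fmap]; exact Nsup_le_norm z
    · simpa using (continuous_norm (E := E2)).tendsto 0
  · have hopen : IsOpen {z : E2 | z ≠ 0} := isOpen_ne
    apply ContinuousAt.congr (f := fun z : E2 => (Nsup z / ‖z‖) • z)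
    · exact ((continuous_Nsup.continuousAt.div
        continuous_norm.continuousAt (norm_ne_zero_iff.2 h)).smul continuousAt_id)
    · exact Filter.eventuallyEq_of_mem (hopen.mem_nhds h)
        (fun z hz => by rw [fmap, if_neg hz])

lemma continuous_gmap : Continuous gmap := by
  rw [continuous_iff_continuousAt]
  intro y
  by_cases h : y = 0
  · subst h
    have h0 : gmap 0 = 0 := by simp [gmap]
    show Tendsto gmap (nhds 0) (nhds (gmap 0))
    rw [h0]
    refine squeeze_zero_norm (fun z => ?_) (a := fun y : E2 => 2 * ‖y‖) ?_
    · calc ‖gmap z‖ ≤ 2 * Nsup (gmap z) := norm_le_two_Nsup _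
        _ = 2 * ‖z‖ := by rw [Nsup_gmap]
    · have : Tendsto (fun y : E2 => ‖y‖) (nhds 0) (nhds 0) := by
        simpa using (continuous_norm (E := E2)).tendsto 0
      simpa using this.const_mul 2
  · have hN : Nsup y ≠ 0 := fun h' => h (Nsup_eq_zero_iff.1 h')
    have hopen : IsOpen {z : E2 | z ≠ 0} := isOpen_ne
    apply ContinuousAt.congr (f := fun z : E2 => (‖z‖ / Nsup z) • z)
    · exact ((continuous_norm.continuousAt.div
        continuous_Nsup.continuousAt hN).smul continuousAt_id)
    · exact Filter.eventuallyEq_of_mem (hopen.mem_nhds h)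
        (fun z hz => by rw [gmap, if_neg hz])

def fhom : E2 ≃ₜ E2 where
  toFun := fmap
  invFun := gmap
  left_inv := gmap_fmap
  right_inv := fmap_gmap
  continuous_toFun := continuous_fmap
  continuous_invFun := continuous_gmap



/-- Counterexample showing (i) ⇏ (iii) without compactness: there is a homeomorphism
`f` of the plane with `f[[-1,1]²] = B` (the closed Euclidean unit disc) and
`f (1,0) = (1,0)` such that, for `S := [-1,1]² \ {(1,0)}`, one has
`conv S = [-1,1]²`, `𝓜^ω(S)` (for `m = 2`, weights `1/2, 1/2`) relatively dense in
`conv S`, `f[conv S] = B`, `conv f[S] = B \ {(1,0)}`, and `f[conv S] ⊄ conv f[S]`. -/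
theorem stmt17 :
    ∃ f : EuclideanSpace ℝ (Fin 2) ≃ₜ EuclideanSpace ℝ (Fin 2),
      ∀ D p S, D = {x : EuclideanSpace ℝ (Fin 2) | ∀ i, x i ∈ Set.Icc (-1 : ℝ) 1} →
        p = (EuclideanSpace.equiv (Fin 2) ℝ).symm ![1, 0] →
        S = D \ {p} →
        f '' D = Metric.closedBall 0 1 ∧
        f p = p ∧
        convexHull ℝ S = D ∧
        convexHull ℝ S ⊆ closure (meanOmega2 f S ∩ convexHull ℝ S) ∧
        f '' convexHull ℝ S = Metric.closedBall 0 1 ∧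
        convexHull ℝ (f '' S) = Metric.closedBall 0 1 \ {p} ∧
        ¬ f '' convexHull ℝ S ⊆ convexHull ℝ (f '' S) := by
  refine ⟨fhom, ?_⟩
  rintro D p S rfl rfl rfl
  set p : E2 := (EuclideanSpace.equiv (Fin 2) ℝ).symm ![1, 0] with hp
  set D : Set E2 := {x : E2 | ∀ i, x i ∈ Set.Icc (-1 : ℝ) 1} with hD
  set S : Set E2 := D \ {p} with hS
  have hfhom : ∀ x : E2, fhom x = fmap x := fun _ => rfl
  have himg : ∀ s : Set E2, fhom '' s = fmap '' s := fun _ => rfl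
  have hmemD : ∀ x : E2, x ∈ D ↔ Nsup x ≤ 1 := by
    intro x
    rw [hD, mem_setOf_eq, Nsup_le_iff zero_le_one]
    simp only [Set.mem_Icc, abs_le]
  have hp0 : p 0 = 1 := rfl
  have hp1 : p 1 = 0 := rfl
  have hNp : Nsup p = 1 := by
    apply le_antisymm
    · rw [Nsup_le_iff zero_le_one]
      intro i
      fin_cases i <;> simp [hp0, hp1]
    · simpa [hp0] using abs_le_Nsup p 0
  have hnormp : ‖p‖ = 1 := by
    rw [EuclideanSpace.norm_eq, Fin.sum_univ_two]
    simp [hp0, hp1]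
  have hpne : p ≠ 0 := by
    intro h
    have : p 0 = 0 := by rw [h]; rfl
    rw [hp0] at this; norm_num at this
  have hfp : fmap p = p := by
    rw [fmap, if_neg hpne, hNp, hnormp]
    norm_num
  -- f '' D = closedBall 0 1
  have h1 : fmap '' D = Metric.closedBall (0 : E2) 1 := by
    ext y
    constructor
    · rintro ⟨x, hx, rfl⟩
      rw [mem_closedBall_zero_iff, norm_fmap]
      exact (hmemD x).1 hx
    · intro hy
      refine ⟨gmap y, ?_, fmap_gmap y⟩
      rw [hmemD, Nsup_gmap]
      exact mem_closedBall_zero_iff.1 hy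
  -- Convexity of D
  have hDconv : Convex ℝ D := by
    intro x hx y hy a b ha hb hab
    intro i
    have h := (convex_Icc (-1 : ℝ) 1) (hx i) (hy i) ha hb hab
    simpa [PiLp.add_apply, PiLp.smul_apply, smul_eq_mul] using h
  -- conv S = D
  have hconvS : convexHull ℝ S = D := by
    apply le_antisymm
    · exact convexHull_min diff_subset hDconv
    · intro x hx
      by_cases hxp : x = p
      · subst hxp
        set u : E2 := (EuclideanSpace.equiv (Fin 2) ℝ).symm ![1, 1] with hu
        set v : E2 := (EuclideanSpace.equiv (Fin 2) ℝ).symm ![1, -1] with hv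
        have hu0 : u 0 = 1 := rfl
        have hu1 : u 1 = 1 := rfl
        have hv0 : v 0 = 1 := rfl
        have hv1 : v 1 = -1 := rfl
        have huS : u ∈ S := by
          constructor
          · intro i; fin_cases i <;> simp [hu0, hu1]
          · intro h
            have : u 1 = p 1 := by rw [mem_singleton_iff.1 h]
            rw [hu1, hp1] at this; norm_num at this
        have hvS : v ∈ S := by
          constructor
          · intro i; fin_cases i <;> simp [hv0, hv1]
          · intro h
            have : v 1 = p 1 := by rw [mem_singleton_iff.1 h]
            rw [hv1, hp1] at this; norm_num at this
        have hxuv : p = (1/2 : ℝ) • u + (1/2 : ℝ) • v := by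
          ext i
          fin_cases i
          · show (1 : ℝ) = 1/2 * 1 + 1/2 * 1
            norm_num
          · show (0 : ℝ) = 1/2 * 1 + 1/2 * (-1)
            norm_num
        rw [hxuv]
        exact (convex_convexHull ℝ S) (subset_convexHull ℝ S huS)
          (subset_convexHull ℝ S hvS) (by norm_num) (by norm_num) (by norm_num)
      · exact subset_convexHull ℝ S ⟨hx, hxp⟩
  -- density
  have hSsub : S ⊆ meanOmega2 fhom S ∩ convexHull ℝ S := by
    intro x hx
    exact ⟨mem_iUnion.2 ⟨0, hx⟩, subset_convexHull ℝ S hx⟩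
  have h4 : convexHull ℝ S ⊆ closure (meanOmega2 fhom S ∩ convexHull ℝ S) := by
    intro x hx
    rw [hconvS] at hx
    by_cases hxp : x = p
    · subst hxp
      set w : ℕ → E2 := fun n => (1 - 1/(n+1) : ℝ) • p with hw
      have hwt : Filter.Tendsto w atTop (nhds p) := by
        have h0 : Filter.Tendsto (fun n : ℕ => (1 - 1/(n+1) : ℝ)) atTop (nhds 1) := by
          have := tendsto_one_div_add_atTop_nhds_zero_nat (𝕜 := ℝ)
          simpa using tendsto_const_nhds.sub this
        simpa only [one_smul] using h0.smul_const p
      apply mem_closure_of_tendsto hwt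
      apply Filter.Eventually.of_forall
      intro n
      have htn : (0 : ℝ) < 1/(n+1 : ℝ) := by positivity
      have htn1 : (1 : ℝ)/(n+1) ≤ 1 := by
        rw [div_le_one (by positivity)]
        linarith [Nat.cast_nonneg (α := ℝ) n]
      have ht0 : (0 : ℝ) ≤ 1 - 1/(n+1) := by linarith
      have ht1 : (1 - 1/(n+1) : ℝ) < 1 := by linarith
      apply hSsub
      constructor
      · rw [hmemD, hw]
        simp only
        rw [Nsup_smul, hNp, mul_one, abs_of_nonneg ht0]
        linarith
      · intro h
        have h' : w n = p := mem_singleton_iff.1 h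
        have : (w n) 0 = p 0 := by rw [h']
        rw [hw] at this
        simp only [PiLp.smul_apply, smul_eq_mul, hp0, mul_one] at this
        linarith
    · exact subset_closure (hSsub ⟨hx, hxp⟩)
  -- convexity of B \ {p}
  have hBp : Convex ℝ (Metric.closedBall (0 : E2) 1 \ {p}) := by
    intro x hx y hy a b ha hb hab
    refine ⟨convex_closedBall (0 : E2) 1 hx.1 hy.1 ha hb hab, ?_⟩
    intro hmem
    have heq : a • x + b • y = p := mem_singleton_iff.1 hmem
    rcases ha.eq_or_lt with ha0 | ha0
    · rw [← ha0, zero_add] at hab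
      rw [← ha0, zero_smul, zero_add, hab, one_smul] at heq
      exact hy.2 heq
    rcases hb.eq_or_lt with hb0 | hb0
    · rw [← hb0, add_zero] at hab
      rw [← hb0, zero_smul, add_zero, hab, one_smul] at heq
      exact hx.2 heq
    by_cases hxy : x = y
    · rw [hxy, Convex.combo_self hab] at heq
      rw [hxy] at hx
      exact hx.2 heq
    · have := strictConvex_closedBall ℝ (0 : E2) 1 hx.1 hy.1 hxy ha0 hb0 hab
      rw [interior_closedBall (0 : E2) one_ne_zero] at this
      rw [heq] at this
      rw [mem_ball_zero_iff, hnormp] at this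
      exact lt_irrefl 1 this
  -- f '' S
  have hinj : Function.Injective fmap := Function.LeftInverse.injective gmap_fmap
  have hfS : fmap '' S = Metric.closedBall (0 : E2) 1 \ {p} := by
    rw [hS, Set.image_diff hinj, h1, Set.image_singleton, hfp]
  refine ⟨h1, hfp, hconvS, h4, ?_, ?_, ?_⟩
  · rw [himg, hconvS, h1]
  · rw [himg, hfS]
    exact hBp.convexHull_eq
  · intro hsub
    have hpmem : p ∈ fhom '' convexHull ℝ S := by
      rw [himg, hconvS, h1, mem_closedBall_zero_iff, hnormp]
    have := hsub hpmem
    rw [himg, hfS, hBp.convexHull_eq] at this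
    exact this.2 rfl

end
end Helpers
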